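/- arXiv:1605.08674 — 2 statements merged into one kernel-verified Lean document; each statement's English description precedes it below -/
import Mathlib

section
/- If γ > 0 and f is a minimizer of ρ_{C,γ}, then ρ_{C,γ}(f) = 1 − ∫_𝔻 |f(z)| e^{−γ|z|²} dA(z). -/
open MeasureTheory Filter Set Metric Polynomial
open scoped ENNReal Topology NNReal

noncomputable section

/-- Normalized area measure on `ℂ`: `dA = (1/π)·(Lebesgue measure)`. -/
def dA : Measure ℂ := (ENNReal.ofReal Real.pi)⁻¹ • volume

/-- The open annulus `𝔸(s,t) = {z : s < |z| < t}`. -/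
def ann (s t : ℝ) : Set ℂ := ball (0:ℂ) t \ closedBall (0:ℂ) s

/-- The Cauchy–Riemann operator `∂̄u = (u_x + i u_y)/2` for complex-valued functions. -/
def dbar (u : ℂ → ℂ) (z : ℂ) : ℂ :=
  (fderiv ℝ u z 1 + Complex.I * fderiv ℝ u z Complex.I) / 2

/-- The Cauchy–Riemann operator `∂̄u = (u_x + i u_y)/2` for real-valued functions. -/
def dbarR (u : ℂ → ℝ) (z : ℂ) : ℂ :=
  (((fderiv ℝ u z 1 : ℝ) : ℂ) + Complex.I * ((fderiv ℝ u z Complex.I : ℝ) : ℂ)) / 2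

/-- The planar discrepancy functional `ρ_{C,γ}(f) = ∫_𝔻 (|f(z)|e^{-γ|z|²} - 1)² dA(z)`. -/
def rhoC (γ : ℝ) (f : ℂ → ℂ) : ℝ≥0∞ :=
  ∫⁻ z in ball (0:ℂ) 1,
    ENNReal.ofReal ((‖f z‖ * Real.exp (-γ * ‖z‖ ^ 2) - 1) ^ 2) ∂dA

/-- The tight planar discrepancy functional
`ρ*_{C,γ}(f) = ∫_ℂ (|f(z)|e^{-γ|z|²} - 1_𝔻(z))² dA(z)`. -/
def rhoCStar (γ : ℝ) (f : ℂ → ℂ) : ℝ≥0∞ :=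
  ∫⁻ z, ENNReal.ofReal ((‖f z‖ * Real.exp (-γ * ‖z‖ ^ 2)
      - (ball (0:ℂ) 1).indicator (fun _ => (1:ℝ)) z) ^ 2) ∂dA

/-- The planar discrepancy density `ρ_C`. -/
def rhoCd : ℝ≥0∞ :=
  liminf (fun γ : ℝ => ⨅ p : Polynomial ℂ, rhoC γ fun z => p.eval z) atTop

/-- The tight planar discrepancy density `ρ_C*`. -/
def rhoCdStar : ℝ≥0∞ :=
  liminf (fun γ : ℝ => ⨅ p : Polynomial ℂ, rhoCStar γ fun z => p.eval z) atTop

/-- The hyperbolic discrepancy functional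
`ρ_{H,r}(f) = (1/log(1/(1-r²))) ∫_{D(0,r)} ((1-|z|²)|f(z)| - 1)² dA(z)/(1-|z|²)`. -/
def rhoH (r : ℝ) (f : ℂ → ℂ) : ℝ≥0∞ :=
  (ENNReal.ofReal (Real.log (1 / (1 - r ^ 2))))⁻¹ *
    ∫⁻ z in ball (0:ℂ) r,
      ENNReal.ofReal (((1 - ‖z‖ ^ 2) * ‖f z‖ - 1) ^ 2
        / (1 - ‖z‖ ^ 2)) ∂dA

/-- The tight hyperbolic discrepancy functional
`ρ*_{H,r}(f) = (1/log(1/(1-r²))) ∫_𝔻 ((1-|z|²)|f(z)| - 1_{D(0,r)}(z))² dA(z)/(1-|z|²)`. -/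
def rhoHStar (r : ℝ) (f : ℂ → ℂ) : ℝ≥0∞ :=
  (ENNReal.ofReal (Real.log (1 / (1 - r ^ 2))))⁻¹ *
    ∫⁻ z in ball (0:ℂ) 1,
      ENNReal.ofReal (((1 - ‖z‖ ^ 2) * ‖f z‖
        - (ball (0:ℂ) r).indicator (fun _ => (1:ℝ)) z) ^ 2
        / (1 - ‖z‖ ^ 2)) ∂dA

/-- The hyperbolic discrepancy density `ρ_H`. -/
def rhoHd : ℝ≥0∞ :=
  liminf (fun r : ℝ => ⨅ p : Polynomial ℂ, rhoH r fun z => p.eval z) (𝓝[<] (1:ℝ))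

/-- The tight hyperbolic discrepancy density `ρ_H*`. -/
def rhoHdStar : ℝ≥0∞ :=
  liminf (fun r : ℝ => ⨅ p : Polynomial ℂ, rhoHStar r fun z => p.eval z) (𝓝[<] (1:ℝ))

/-- `f` is a minimizer of `ρ_{C,γ}` among holomorphic functions on `𝔻`. -/
def IsMinC (γ : ℝ) (f : ℂ → ℂ) : Prop :=
  DifferentiableOn ℂ f (ball 0 1) ∧
    ∀ g : ℂ → ℂ, DifferentiableOn ℂ g (ball 0 1) → rhoC γ f ≤ rhoC γ g

/-- `f` is a minimizer of `ρ_{H,r}` among holomorphic functions on `𝔻`. -/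
def IsMinH (r : ℝ) (f : ℂ → ℂ) : Prop :=
  DifferentiableOn ℂ f (ball 0 1) ∧
    ∀ g : ℂ → ℂ, DifferentiableOn ℂ g (ball 0 1) → rhoH r f ≤ rhoH r g

end

/- Comparing a minimizer `f` with its multiples `t • f`, `t ≥ 0`, the functional becomes the
quadratic `t ↦ A t² - 2 B t + 1` with `A = ∫_𝔻 |f|² e^{-2γ|z|²} dA` and
`B = ∫_𝔻 |f| e^{-γ|z|²} dA`.
Its minimum on `[0, ∞)` is attained at the interior point `t = 1`, so its derivative vanishes
there: `A = B`, whence `ρ_{C,γ}(f) = A - 2B + 1 = 1 - B`. -/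

theorem eq_of_isMinOn_Ici_quadratic {a b c : ℝ}
    (h : IsMinOn (fun t : ℝ => a * t ^ 2 - 2 * b * t + c) (Ici 0) 1) : a = b := by
  have hloc : IsLocalMin (fun t : ℝ => a * t ^ 2 - 2 * b * t + c) 1 :=
    h.isLocalMin (Ici_mem_nhds zero_lt_one)
  have hderiv : HasDerivAt (fun t : ℝ => a * t ^ 2 - 2 * b * t + c) (a * (2 * 1) - 2 * b) 1 := by
    simpa using (((hasDerivAt_pow 2 (1 : ℝ)).const_mul a).sub
      ((hasDerivAt_id (1 : ℝ)).const_mul (2 * b))).add_const c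
  linarith [hloc.hasDerivAt_eq_zero hderiv]

section Quadratic

variable {α : Type*} [MeasurableSpace α] {μ : Measure α} {φ : α → ℝ}

theorem lintegral_ofReal_mul_sub_one_sq_add (hφ : 0 ≤ φ) (hφm : AEMeasurable φ μ) {t : ℝ}
    (ht : 0 ≤ t) :
    ∫⁻ x, ENNReal.ofReal ((t * φ x - 1) ^ 2) ∂μ
        + ENNReal.ofReal (2 * t) * ∫⁻ x, ENNReal.ofReal (φ x) ∂μ
      = ENNReal.ofReal (t ^ 2) * ∫⁻ x, ENNReal.ofReal (φ x ^ 2) ∂μ + μ univ := by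
  have hpt : ∀ x, ENNReal.ofReal ((t * φ x - 1) ^ 2)
        + ENNReal.ofReal (2 * t) * ENNReal.ofReal (φ x)
      = ENNReal.ofReal (t ^ 2) * ENNReal.ofReal (φ x ^ 2) + 1 := by
    intro x
    have hφx : 0 ≤ φ x := hφ x
    rw [← ENNReal.ofReal_mul (by positivity), ← ENNReal.ofReal_mul (by positivity),
      ← ENNReal.ofReal_one, ← ENNReal.ofReal_add (by positivity) (by positivity),
      ← ENNReal.ofReal_add (by positivity) zero_le_one]
    congr 1
    ring
  rw [← lintegral_const_mul' _ _ ENNReal.ofReal_ne_top,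
    ← lintegral_const_mul' _ _ ENNReal.ofReal_ne_top, ← lintegral_add_right' _ (by fun_prop),
    ← lintegral_one, ← lintegral_add_right _ measurable_const]
  exact lintegral_congr hpt

theorem lintegral_ofReal_ne_top_of_lintegral_sub_one_sq_ne_top [IsFiniteMeasure μ]
    (h : ∫⁻ x, ENNReal.ofReal ((φ x - 1) ^ 2) ∂μ ≠ ⊤) : ∫⁻ x, ENNReal.ofReal (φ x) ∂μ ≠ ⊤ := by
  have hpt : ∀ x, ENNReal.ofReal (φ x) ≤ ENNReal.ofReal ((φ x - 1) ^ 2) + 2 := fun x => by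
    rw [← ENNReal.ofReal_ofNat, ← ENNReal.ofReal_add (sq_nonneg _) zero_le_two]
    exact ENNReal.ofReal_le_ofReal (by nlinarith [sq_nonneg (φ x - 3 / 2)])
  refine ne_top_of_le_ne_top ?_ (lintegral_mono hpt)
  rw [lintegral_add_right _ measurable_const, lintegral_const]
  finiteness

theorem lintegral_sub_one_sq_eq_one_sub_of_isMinOn [IsProbabilityMeasure μ] (hφ : 0 ≤ φ)
    (hφm : AEMeasurable φ μ)
    (hmin : IsMinOn (fun t : ℝ => ∫⁻ x, ENNReal.ofReal ((t * φ x - 1) ^ 2) ∂μ) (Ici 0) 1) :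
    ∫⁻ x, ENNReal.ofReal ((φ x - 1) ^ 2) ∂μ = 1 - ∫⁻ x, ENNReal.ofReal (φ x) ∂μ := by
  set F : ℝ → ℝ≥0∞ := fun t => ∫⁻ x, ENNReal.ofReal ((t * φ x - 1) ^ 2) ∂μ
  set A := ∫⁻ x, ENNReal.ofReal (φ x ^ 2) ∂μ
  set B := ∫⁻ x, ENNReal.ofReal (φ x) ∂μ
  have hexpand : ∀ t, 0 ≤ t →
      F t + ENNReal.ofReal (2 * t) * B = ENNReal.ofReal (t ^ 2) * A + 1 := fun t ht => by
    simpa only [measure_univ] using lintegral_ofReal_mul_sub_one_sq_add hφ hφm ht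
  have hF1 : F 1 = ∫⁻ x, ENNReal.ofReal ((φ x - 1) ^ 2) ∂μ := by simp [F]
  have hF1fin : F 1 ≠ ⊤ := ne_top_of_le_ne_top ENNReal.one_ne_top <| by
    simpa [F] using isMinOn_iff.mp hmin 0 self_mem_Ici
  have hB : B ≠ ⊤ := lintegral_ofReal_ne_top_of_lintegral_sub_one_sq_ne_top (hF1 ▸ hF1fin)
  have hA : A ≠ ⊤ := by
    have h : ENNReal.ofReal (1 ^ 2) * A + 1 ≠ ⊤ := by
      rw [← hexpand 1 zero_le_one]; finiteness
    simpa using h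
  have hFfin : ∀ t, 0 ≤ t → F t ≠ ⊤ := fun t ht =>
    ne_top_of_le_ne_top (b := ENNReal.ofReal (t ^ 2) * A + 1) (by finiteness)
      (hexpand t ht ▸ le_self_add)
  have hq : ∀ t, 0 ≤ t → (F t).toReal = A.toReal * t ^ 2 - 2 * B.toReal * t + 1 :=
      fun t ht => by
    have h := congrArg ENNReal.toReal (hexpand t ht)
    rw [ENNReal.toReal_add (hFfin t ht) (by finiteness),
      ENNReal.toReal_add (by finiteness) (by simp),
      ENNReal.toReal_mul, ENNReal.toReal_mul, ENNReal.toReal_ofReal (by positivity),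
      ENNReal.toReal_ofReal (by positivity), ENNReal.toReal_one] at h
    linarith
  have hAB : A.toReal = B.toReal := by
    refine eq_of_isMinOn_Ici_quadratic (c := 1) (isMinOn_iff.2 fun t ht => ?_)
    simp only [← hq t ht, ← hq 1 zero_le_one]
    exact ENNReal.toReal_mono (hFfin t ht) (isMinOn_iff.1 hmin t ht)
  calc ∫⁻ x, ENNReal.ofReal ((φ x - 1) ^ 2) ∂μ = ENNReal.ofReal (F 1).toReal := by
        rw [ENNReal.ofReal_toReal hF1fin, hF1]
    _ = ENNReal.ofReal (1 - B.toReal) := by rw [hq 1 zero_le_one, hAB]; ring_nf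
    _ = 1 - B := by rw [ENNReal.ofReal_sub _ ENNReal.toReal_nonneg, ENNReal.ofReal_one,
        ENNReal.ofReal_toReal hB]

end Quadratic

theorem dA_ball_zero_one : dA (ball (0 : ℂ) 1) = 1 := by
  rw [dA, Measure.smul_apply, Complex.volume_ball, smul_eq_mul, ENNReal.ofReal_one, one_pow,
    one_mul, ← ENNReal.ofReal_coe_nnreal, NNReal.coe_real_pi,
    ENNReal.inv_mul_cancel (by simp [Real.pi_pos]) ENNReal.ofReal_ne_top]

instance isProbabilityMeasure_dA_restrict_ball :
    IsProbabilityMeasure (dA.restrict (ball (0 : ℂ) 1)) :=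
  ⟨by rw [Measure.restrict_apply_univ, dA_ball_zero_one]⟩

theorem rhoC_ofReal_mul (γ : ℝ) (f : ℂ → ℂ) {t : ℝ} (ht : 0 ≤ t) :
    rhoC γ (fun z => (t : ℂ) * f z)
      = ∫⁻ z in ball (0 : ℂ) 1,
          ENNReal.ofReal ((t * (‖f z‖ * Real.exp (-γ * ‖z‖ ^ 2)) - 1) ^ 2) ∂dA := by
  simp only [rhoC, norm_mul, Complex.norm_real, Real.norm_of_nonneg ht, mul_assoc]

theorem planar_minimizer_value_general (γ : ℝ) (f : ℂ → ℂ) (hf : IsMinC γ f) :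
    rhoC γ f = 1 - ∫⁻ z in ball (0:ℂ) 1, ENNReal.ofReal
        (‖f z‖ * Real.exp (-γ * ‖z‖ ^ 2)) ∂dA := by
  have hφm : AEMeasurable (fun z => ‖f z‖ * Real.exp (-γ * ‖z‖ ^ 2))
      (dA.restrict (ball 0 1)) :=
    (hf.1.continuousOn.norm.mul (by fun_prop : Continuous _).continuousOn).aemeasurable
      measurableSet_ball
  have hmin : IsMinOn (fun t : ℝ => ∫⁻ z in ball (0 : ℂ) 1,
      ENNReal.ofReal ((t * (‖f z‖ * Real.exp (-γ * ‖z‖ ^ 2)) - 1) ^ 2) ∂dA) (Ici 0) 1 := by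
    refine isMinOn_iff.2 fun t ht => ?_
    rw [← rhoC_ofReal_mul γ f ht, ← rhoC_ofReal_mul γ f zero_le_one]
    simpa using hf.2 (fun z => (t : ℂ) * f z) ((differentiableOn_const _).mul hf.1)
  simpa [rhoC] using
    lintegral_sub_one_sq_eq_one_sub_of_isMinOn (fun z => by positivity) hφm hmin

/-- if `γ > 0` and `f` is a minimizer of `ρ_{C,γ}`, then
`ρ_{C,γ}(f) = 1 - ∫_𝔻 |f| e^{-γ|z|²} dA`. -/
theorem planar_minimizer_value (γ : ℝ) (hγ : 0 < γ) (f : ℂ → ℂ) (hf : IsMinC γ f) :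
    rhoC γ f = 1 - ∫⁻ z in ball (0:ℂ) 1, ENNReal.ofReal
        (‖f z‖ * Real.exp (-γ * ‖z‖ ^ 2)) ∂dA :=
  planar_minimizer_value_general γ f hf
end

section
/- Hyperbolic parameter freedom: let k be a positive integer and let α : (0,1) → (0,1) satisfy r^k ≤ α_r < 1 for all 0 < r < 1. For 0<r<1, 0<α<1 and f holomorphic, define ρ_{H,r,α}(f) = (α²/log(1/(1−r²))) ∫_{D(0,r)} ((1−|αz|²)|f(z)| − 1)² dA(z)/(1−|αz|²). Then liminf_{r→1⁻} inf_{f ∈ Pol(ℂ)} ρ_{H,r,α_r}(f) ≥ ρ_H. -/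
open MeasureTheory Filter Set Metric Polynomial
open scoped ENNReal Topology NNReal

/-! Substituting `w = α z` turns `ρ_{H,r,α}(p)` into `(log(1/(1-s²)) / log(1/(1-r²))) · ρ_{H,s}(q)`
with `s = α r` and `q(w) = p(w/α)`, again a polynomial. Since `r^(k+1) ≤ s < 1`, `s → 1⁻` as
`r → 1⁻`, and Bernoulli's inequality gives `1 - s² ≤ (k+1)(1 - r²)`, so the logarithmic factor is at
least `1 - log(k+1) / log(1/(1-r²)) → 1`. -/

open scoped Pointwise

theorem one_sub_mul_sq_le {k : ℕ} {a r : ℝ} (hr : 0 ≤ r) (ha : r ^ k ≤ a) :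
    1 - (a * r) ^ 2 ≤ (k + 1) * (1 - r ^ 2) := by
  have hpow : (r ^ 2) ^ (k + 1) ≤ (a * r) ^ 2 := by
    rw [← pow_mul, mul_comm 2, pow_mul, pow_succ]
    exact pow_le_pow_left₀ (by positivity) (mul_le_mul_of_nonneg_right ha hr) 2
  have hbern := one_add_mul_le_pow (show (-2 : ℝ) ≤ r ^ 2 - 1 by nlinarith) (k + 1)
  rw [add_sub_cancel] at hbern
  push_cast at hbern
  linarith

theorem log_one_div_one_sub_sq_le {k : ℕ} {a r : ℝ} (hr : 0 ≤ r) (hr1 : r < 1)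
    (ha : r ^ k ≤ a) (har : a * r < 1) :
    Real.log (1 / (1 - r ^ 2)) ≤ Real.log (1 / (1 - (a * r) ^ 2)) + Real.log (k + 1) := by
  have har0 : 0 < 1 - (a * r) ^ 2 := by nlinarith [mul_nonneg ((pow_nonneg hr k).trans ha) hr]
  have hr0 : 0 < 1 - r ^ 2 := by nlinarith
  rw [one_div, one_div, Real.log_inv, Real.log_inv]
  have := Real.log_le_log har0 (one_sub_mul_sq_le hr ha)
  rw [Real.log_mul (by positivity) hr0.ne'] at this
  linarith

theorem log_one_div_one_sub_sq_pos {r : ℝ} (hr : 0 < r) (hr1 : r < 1) :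
    0 < Real.log (1 / (1 - r ^ 2)) := by
  rw [one_div, Real.log_inv, neg_pos]
  exact Real.log_neg (by nlinarith) (by nlinarith)

theorem tendsto_log_one_div_one_sub_sq :
    Tendsto (fun r : ℝ => Real.log (1 / (1 - r ^ 2))) (𝓝[<] 1) atTop := by
  have h : Tendsto (fun r : ℝ => 1 - r ^ 2) (𝓝[<] 1) (𝓝[>] 0) := by
    refine tendsto_nhdsWithin_iff.2 ⟨?_, ?_⟩
    · simpa using ((by fun_prop : Continuous fun r : ℝ => 1 - r ^ 2).tendsto 1).mono_left
        nhdsWithin_le_nhds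
    · filter_upwards [Ioo_mem_nhdsLT (show (0:ℝ) < 1 by norm_num)] with r hr
      exact mem_Ioi.2 (by nlinarith [hr.1, hr.2])
  refine (Real.tendsto_log_atTop.comp (tendsto_inv_nhdsGT_zero.comp h)).congr fun r => ?_
  simp only [Function.comp_apply, one_div]

theorem tendsto_nhdsLT_one_of_pow_le {s : ℝ → ℝ} (n : ℕ)
    (h : ∀ᶠ r in 𝓝[<] (1:ℝ), r ^ n ≤ s r ∧ s r < 1) : Tendsto s (𝓝[<] 1) (𝓝[<] 1) := by
  refine tendsto_nhdsWithin_iff.2 ⟨?_, h.mono fun r hr => hr.2⟩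
  have hpow : Tendsto (fun r : ℝ => r ^ n) (𝓝[<] 1) (𝓝 1) := by
    simpa using ((continuous_pow n).tendsto (1:ℝ)).mono_left nhdsWithin_le_nhds
  exact tendsto_of_tendsto_of_tendsto_of_le_of_le' hpow tendsto_const_nhds
    (h.mono fun r hr => hr.1) (h.mono fun r hr => hr.2.le)

theorem one_le_liminf_ofReal_div {ι : Type*} {l : Filter ι} [l.NeBot] {u v : ι → ℝ} (c : ℝ)
    (hv : Tendsto v l atTop) (huv : ∀ᶠ i in l, v i - c ≤ u i) :
    1 ≤ liminf (fun i => ENNReal.ofReal (u i / v i)) l := by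
  have hlim : Tendsto (fun i => ENNReal.ofReal (1 - c / v i)) l (𝓝 1) := by
    simpa using ENNReal.tendsto_ofReal ((tendsto_const_nhds.div_atTop hv).const_sub 1)
  rw [← hlim.liminf_eq]
  refine liminf_le_liminf ?_
  filter_upwards [huv, hv.eventually_gt_atTop 0] with i hi hvi
  refine ENNReal.ofReal_le_ofReal ?_
  rw [one_sub_div hvi.ne']
  exact div_le_div_of_nonneg_right hi hvi.le

theorem MeasureTheory.Measure.setLIntegral_comp_smul {E : Type*} [NormedAddCommGroup E]
    [NormedSpace ℝ E] [MeasurableSpace E] [BorelSpace E] [FiniteDimensional ℝ E]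
    (μ : Measure E) [μ.IsAddHaarMeasure] {a : ℝ} (ha : a ≠ 0) (f : E → ℝ≥0∞) (s : Set E) :
    ∫⁻ x in s, f (a • x) ∂μ
      = ENNReal.ofReal |(a ^ Module.finrank ℝ E)⁻¹| * ∫⁻ y in a • s, f y ∂μ := by
  have he : MeasurableEmbedding (a • · : E → E) :=
    (Homeomorph.smulOfNeZero a ha).measurableEmbedding
  rw [← smul_eq_mul, ← lintegral_smul_measure, ← Measure.restrict_smul,
    ← Measure.map_addHaar_smul μ ha, he.restrict_map, he.lintegral_map, preimage_smul₀ ha,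
    inv_smul_smul₀ ha]

instance : dA.IsAddHaarMeasure :=
  .smul _ (ENNReal.inv_ne_zero.2 ENNReal.ofReal_ne_top)
    (ENNReal.inv_ne_top.2 (ENNReal.ofReal_pos.2 Real.pi_pos).ne')

/-- The functional `ρ_{H,r,α}` of the statement, with `α = a`. -/
noncomputable def rhoHScaled (a r : ℝ) (f : ℂ → ℂ) : ℝ≥0∞ :=
  ENNReal.ofReal (a ^ 2) * (ENNReal.ofReal (Real.log (1 / (1 - r ^ 2))))⁻¹ *
    ∫⁻ z in ball (0:ℂ) r, ENNReal.ofReal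
      (((1 - a ^ 2 * ‖z‖ ^ 2) * ‖f z‖ - 1) ^ 2 / (1 - a ^ 2 * ‖z‖ ^ 2)) ∂dA

theorem rhoHScaled_eq_mul_rhoH (f : ℂ → ℂ) {a r : ℝ} (ha : 0 < a) (hr : 0 < r) (hr1 : r < 1)
    (har : a * r < 1) :
    rhoHScaled a r f = ENNReal.ofReal
        (Real.log (1 / (1 - (a * r) ^ 2)) / Real.log (1 / (1 - r ^ 2))) *
      rhoH (a * r) fun w => f (a⁻¹ • w) := by
  set g : ℂ → ℝ≥0∞ := fun w =>
    ENNReal.ofReal (((1 - ‖w‖ ^ 2) * ‖f (a⁻¹ • w)‖ - 1) ^ 2 / (1 - ‖w‖ ^ 2))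
  have hnorm (z : ℂ) : ‖a • z‖ ^ 2 = a ^ 2 * ‖z‖ ^ 2 := by
    rw [norm_smul, Real.norm_of_nonneg ha.le, mul_pow]
  have hcov : ∫⁻ w in ball (0:ℂ) (a * r), g w ∂dA = ENNReal.ofReal (a ^ 2) *
      ∫⁻ z in ball (0:ℂ) r, ENNReal.ofReal
        (((1 - a ^ 2 * ‖z‖ ^ 2) * ‖f z‖ - 1) ^ 2 / (1 - a ^ 2 * ‖z‖ ^ 2)) ∂dA := by
    have := dA.setLIntegral_comp_smul ha.ne' g (ball 0 r)
    simp only [g, hnorm, inv_smul_smul₀ ha.ne'] at this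
    rw [this, _root_.smul_ball ha.ne', smul_zero, Real.norm_of_nonneg ha.le,
      Complex.finrank_real_complex, ← mul_assoc, ← ENNReal.ofReal_mul (sq_nonneg a),
      abs_of_pos (by positivity), mul_inv_cancel₀ (by positivity), ENNReal.ofReal_one, one_mul]
  have hLs := log_one_div_one_sub_sq_pos (mul_pos ha hr) har
  rw [rhoH, hcov, ENNReal.ofReal_div_of_pos (log_one_div_one_sub_sq_pos hr hr1),
    ← one_mul (rhoHScaled a r f),
    ← ENNReal.mul_inv_cancel (ENNReal.ofReal_pos.2 hLs).ne' ENNReal.ofReal_ne_top, rhoHScaled,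
    ENNReal.div_eq_inv_mul]
  ring

theorem ofReal_mul_iInf_rhoH_le_iInf_rhoHScaled {a r : ℝ} (ha : 0 < a) (hr : 0 < r)
    (hr1 : r < 1) (har : a * r < 1) :
    ENNReal.ofReal (Real.log (1 / (1 - (a * r) ^ 2)) / Real.log (1 / (1 - r ^ 2))) *
        ⨅ q : ℂ[X], rhoH (a * r) (fun w => q.eval w)
      ≤ ⨅ p : ℂ[X], rhoHScaled a r fun z => p.eval z := by
  refine le_iInf fun p => ?_
  rw [rhoHScaled_eq_mul_rhoH _ ha hr hr1 har]
  refine mul_le_mul_right (iInf_le_of_le (p.comp (C (a⁻¹ : ℂ) * X)) (le_of_eq ?_)) _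
  simp [Complex.real_smul]

theorem hyperbolic_parameter_freedom_general (k : ℕ) (α : ℝ → ℝ)
    (hα : ∀ r : ℝ, 0 < r → r < 1 → r ^ k ≤ α r ∧ α r < 1) :
    rhoHd ≤ liminf (fun r : ℝ => ⨅ p : Polynomial ℂ,
        ENNReal.ofReal ((α r) ^ 2) * (ENNReal.ofReal (Real.log (1 / (1 - r ^ 2))))⁻¹ *
          ∫⁻ z in ball (0:ℂ) r, ENNReal.ofReal
            (((1 - (α r) ^ 2 * ‖z‖ ^ 2) * ‖p.eval z‖ - 1) ^ 2
              / (1 - (α r) ^ 2 * ‖z‖ ^ 2)) ∂dA)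
      (𝓝[<] (1:ℝ)) := by
  have hbounds : ∀ᶠ r in 𝓝[<] (1:ℝ),
      0 < r ∧ r < 1 ∧ 0 < α r ∧ r ^ k ≤ α r ∧ α r * r < 1 := by
    filter_upwards [Ioo_mem_nhdsLT one_pos] with r ⟨hr, hr1⟩
    obtain ⟨hk, hα1⟩ := hα r hr hr1
    exact ⟨hr, hr1, (pow_pos hr k).trans_le hk, hk, mul_lt_one_of_nonneg_of_lt_one_left
      ((pow_pos hr k).le.trans hk) hα1 hr1.le⟩
  have hs : Tendsto (fun r => α r * r) (𝓝[<] 1) (𝓝[<] 1) :=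
    tendsto_nhdsLT_one_of_pow_le (k + 1) <| hbounds.mono fun r ⟨hr, _, _, hk, har⟩ =>
      ⟨pow_succ r k ▸ mul_le_mul_of_nonneg_right hk hr.le, har⟩
  have hratio : 1 ≤ liminf (fun r => ENNReal.ofReal
      (Real.log (1 / (1 - (α r * r) ^ 2)) / Real.log (1 / (1 - r ^ 2)))) (𝓝[<] 1) :=
    one_le_liminf_ofReal_div (Real.log (k + 1)) tendsto_log_one_div_one_sub_sq <|
      hbounds.mono fun r ⟨hr, hr1, _, hk, har⟩ => by
        linarith [log_one_div_one_sub_sq_le hr.le hr1 hk har]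
  calc rhoHd ≤ liminf (fun r => ⨅ q : ℂ[X], rhoH (α r * r) fun w => q.eval w) (𝓝[<] 1) :=
        hs.liminf_le_liminf_comp
    _ ≤ _ * _ := le_mul_of_one_le_left' hratio
    _ ≤ _ := ENNReal.le_liminf_mul
    _ ≤ _ := liminf_le_liminf <| hbounds.mono fun r ⟨hr, hr1, hα0, _, har⟩ =>
        ofReal_mul_iInf_rhoH_le_iInf_rhoHScaled hα0 hr hr1 har

/-- hyperbolic parameter freedom. Let `k ≥ 1` and `α : (0,1) → (0,1)`
satisfy `r^k ≤ α_r < 1`. With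
`ρ_{H,r,α}(f) = (α²/log(1/(1-r²))) ∫_{D(0,r)} ((1-|αz|²)|f(z)|-1)² dA(z)/(1-|αz|²)`,
one has `liminf_{r→1⁻} inf_f ρ_{H,r,α_r}(f) ≥ ρ_H`. -/
theorem hyperbolic_parameter_freedom (k : ℕ) (hk : 0 < k) (α : ℝ → ℝ)
    (hα : ∀ r : ℝ, 0 < r → r < 1 → r ^ k ≤ α r ∧ α r < 1)
    (hαpos : ∀ r : ℝ, 0 < r → r < 1 → 0 < α r) :
    rhoHd ≤ liminf (fun r : ℝ => ⨅ p : Polynomial ℂ,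
        ENNReal.ofReal ((α r) ^ 2) * (ENNReal.ofReal (Real.log (1 / (1 - r ^ 2))))⁻¹ *
          ∫⁻ z in ball (0:ℂ) r, ENNReal.ofReal
            (((1 - (α r) ^ 2 * ‖z‖ ^ 2) * ‖p.eval z‖ - 1) ^ 2
              / (1 - (α r) ^ 2 * ‖z‖ ^ 2)) ∂dA)
      (𝓝[<] (1:ℝ)) :=
  hyperbolic_parameter_freedom_general k α hα
end
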